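/- Let f_X̄ be the piecewise density on [0, s_n A] defined by f_X̄(x) = (p_k/(h_k A))·(μ/(1 − e^{−μ}))·e^{−μ(x − s_{k−1}A)/(h_k A)} for x ∈ (s_{k−1}A, s_k A], k = 1,…,n. Then f_X̄ is a probability density on [0, s_n A] and its differential entropy satisfies −∫₀^{s_n A} f_X̄(x)·log f_X̄(x) dx = −∑_{k=1}^n p_k·log( p_k s_n / h_k ) + log(s_n A) − log( μ/(1 − e^{−μ}) ) + 1 − μ e^{−μ}/(1 − e^{−μ}). -/

import Mathlib

open MeasureTheory ProbabilityTheory Real Filter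
open scoped NNReal ENNReal Classical

noncomputable section

/-- Kullback–Leibler divergence (Mathlib's `ProbabilityTheory.klDiv`). -/
def klDiv {α : Type*} [MeasurableSpace α] (μ ν : Measure α) : EReal :=
  if μ ≪ ν ∧ Integrable (llr μ ν) μ then ((∫ x, llr μ ν x ∂μ : ℝ) : EReal) else ⊤

/-- Mutual information of a joint law: KL divergence of the joint law from the
product of its marginals. -/
def mutualInfo {α β : Type*} [MeasurableSpace α] [MeasurableSpace β]
    (joint : Measure (α × β)) : EReal :=
  klDiv joint ((joint.map Prod.fst).prod (joint.map Prod.snd))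

/-- Partial sums `s_k = h_1 + ⋯ + h_k`. -/
def sCum {n : ℕ} (h : Fin n → ℝ) (k : ℕ) : ℝ :=
  ∑ i : Fin n, if i.val < k then h i else 0

/-- Joint law of `(X, Y)` with `Y = hᵀX + Z`, `Z ~ N(0, v)` independent of `X`. -/
def misoJoint {n : ℕ} (h : Fin n → ℝ) (v : ℝ≥0) (μ : Measure (Fin n → ℝ)) :
    Measure ((Fin n → ℝ) × ℝ) :=
  (μ.prod (gaussianReal 0 v)).map (fun p => (p.1, (∑ k, h k * p.1 k) + p.2))

/-- MISO capacity under peak-power constraint `A` and average-power constraint `E`. -/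
def misoCapacity {n : ℕ} (h : Fin n → ℝ) (v : ℝ≥0) (A E : ℝ) : EReal :=
  ⨆ μ ∈ {μ : Measure (Fin n → ℝ) | IsProbabilityMeasure μ ∧
      (∀ k, ∀ᵐ x ∂μ, x k ∈ Set.Icc 0 A) ∧ (∑ k, ∫ x, x k ∂μ) ≤ E},
    mutualInfo (misoJoint h v μ)

/-- MISO capacity under only an average-power constraint `E`. -/
def misoCapacityAvg {n : ℕ} (h : Fin n → ℝ) (v : ℝ≥0) (E : ℝ) : EReal :=
  ⨆ μ ∈ {μ : Measure (Fin n → ℝ) | IsProbabilityMeasure μ ∧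
      (∀ k, ∀ᵐ x ∂μ, 0 ≤ x k) ∧ (∑ k, ∫ x, x k ∂μ) ≤ E},
    mutualInfo (misoJoint h v μ)

/-- Joint law of `(X̄, X̄ + Z)` for the unit-gain SISO channel. -/
def sisoJoint (v : ℝ≥0) (μ : Measure ℝ) : Measure (ℝ × ℝ) :=
  (μ.prod (gaussianReal 0 v)).map (fun p => (p.1, p.1 + p.2))

/-- Unit-gain SISO capacity under peak-power constraint `A` and average-power
constraint `E`. -/
def sisoCapacity (v : ℝ≥0) (A E : ℝ) : EReal :=
  ⨆ μ ∈ {μ : Measure ℝ | IsProbabilityMeasure μ ∧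
      (∀ᵐ x ∂μ, x ∈ Set.Icc 0 A) ∧ (∫ x, x ∂μ) ≤ E},
    mutualInfo (sisoJoint v μ)

/-- Unit-gain SISO capacity under only an average-power constraint `E`. -/
def sisoCapacityAvg (v : ℝ≥0) (E : ℝ) : EReal :=
  ⨆ μ ∈ {μ : Measure ℝ | IsProbabilityMeasure μ ∧
      (∀ᵐ x ∂μ, 0 ≤ x) ∧ (∫ x, x ∂μ) ≤ E},
    mutualInfo (sisoJoint v μ)

/-- The interval `(s_{k-1} A, s_k A]` (with the first one being `[0, s_1 A]`)
corresponding to the event `U = k` (0-indexed: `k ∈ Fin n` stands for `k+1`). -/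
def uInterval {n : ℕ} (h : Fin n → ℝ) (A : ℝ) (k : Fin n) : Set ℝ :=
  if k.val = 0 then Set.Icc 0 (sCum h 1 * A)
  else Set.Ioc (sCum h k.val * A) (sCum h (k.val + 1) * A)

/-- The average input power `∑_k p_k ((E[X̄ | U=k] - A s_{k-1})/h_k + (k-1) A)`
consumed to generate a scalar law of `X̄`. -/
def avgPowerUse {n : ℕ} (h : Fin n → ℝ) (A : ℝ) (μ : Measure ℝ) : ℝ :=
  ∑ k : Fin n,
    (((∫ x in uInterval h A k, x ∂μ) - A * sCum h k.val * (μ (uInterval h A k)).toReal) / h k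
      + (k.val : ℝ) * A * (μ (uInterval h A k)).toReal)

/-- The threshold `α_th`. -/
def alphaTh {n : ℕ} (h : Fin n → ℝ) : ℝ :=
  1 / 2 + (1 / sCum h n) * ∑ k : Fin n, h k * (k.val : ℝ)


/-- The piecewise truncated-exponential density on `[0, s_n A]`: on the `k`-th
interval `(s_{k-1}A, s_k A]` it equals
`(p_k/(h_k A)) (m/(1-e^{-m})) e^{-m (x - s_{k-1}A)/(h_k A)}`. -/
def truncExpPiecewise {n : ℕ} (h : Fin n → ℝ) (A m : ℝ) (p : Fin n → ℝ) (x : ℝ) : ℝ :=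
  ∑ k : Fin n, (uInterval h A k).indicator
    (fun y => p k / (h k * A) * (m / (1 - Real.exp (-m))) *
      Real.exp (-(m * (y - sCum h k.val * A) / (h k * A)))) x

end

/-!
On the `k`-th interval the density is `c_k e^{-m t}` in the rescaled variable
`t = (x - s_{k-1} A) / (h_k A) ∈ (0, 1]`, with `c_k = (p_k / (h_k A)) (m / (1 - e^{-m}))`.
So both integrals split into `n` elementary exponential integrals: the `k`-th piece carries
mass `p_k`, and since `log f = log c_k - m t` there, it contributes
`p_k log c_k - p_k (1 - m e^{-m} / (1 - e^{-m}))` to `∫ f log f`. Expanding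
`log c_k = log (p_k s_n / h_k) - log (s_n A) + log (m / (1 - e^{-m}))` and using `∑ p_k = 1`
gives the formula.
-/

open Set

section sCum

variable {n : ℕ} {h : Fin n → ℝ}

lemma sCum_zero : sCum h 0 = 0 := by simp [sCum]

lemma sCum_succ (k : Fin n) : sCum h (k.val + 1) = sCum h k.val + h k := by
  have hsplit : ∀ i : Fin n, (if i.val < k.val + 1 then h i else 0)
      = (if i.val < k.val then h i else 0) + if i = k then h i else 0 := by
    intro i
    split_ifs <;> simp_all [Fin.ext_iff] <;> omega
  simp only [sCum, hsplit, Finset.sum_add_distrib, Finset.sum_ite_eq', Finset.mem_univ, if_true]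

lemma sCum_mono (hh : ∀ k, 0 ≤ h k) : Monotone (sCum h) := fun k l hkl =>
  Finset.sum_le_sum fun i _ => by split_ifs <;> first | exact hh i | simp | omega

lemma sCum_pos (hh : ∀ k, 0 < h k) {k : ℕ} (hk : 0 < k) (hn : 0 < n) : 0 < sCum h k := by
  have hs1 : sCum h 1 = h ⟨0, hn⟩ := by simpa [sCum_zero] using sCum_succ (h := h) ⟨0, hn⟩
  exact (hh _).trans_le (hs1 ▸ sCum_mono (fun i => (hh i).le) hk)

lemma sCum_mul_monotone {A : ℝ} (hh : ∀ k, 0 ≤ h k) (hA : 0 ≤ A) :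
    Monotone fun k => sCum h k * A :=
  fun _ _ hkl => mul_le_mul_of_nonneg_right (sCum_mono hh hkl) hA

end sCum

lemma one_sub_exp_neg_ne_zero {m : ℝ} (hm : m ≠ 0) : 1 - exp (-m) ≠ 0 :=
  sub_ne_zero.2 fun h => hm (neg_eq_zero.1 (exp_eq_one_iff _ |>.1 h.symm))

lemma one_sub_exp_neg_pos {m : ℝ} (hm : 0 < m) : 0 < 1 - exp (-m) :=
  sub_pos.2 (exp_lt_one_iff.2 (neg_lt_zero.2 hm))

section TruncatedExponential

variable (a L c m : ℝ)

lemma integral_mul_exp_neg_mul_sub_div (hL : L ≠ 0) (hm : m ≠ 0) :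
    ∫ x in a..a + L, c * exp (-(m * (x - a) / L)) = c * L / m * (1 - exp (-m)) := by
  have hderiv : ∀ x ∈ uIcc a (a + L),
      HasDerivAt (fun y => -(c * L / m) * exp (-(m * (y - a) / L)))
        (c * exp (-(m * (x - a) / L))) x := by
    intro x _
    have hu : HasDerivAt (fun y => m * (y - a) / L) (m / L) x := by
      simpa using (((hasDerivAt_id x).sub_const a).const_mul m).div_const L
    refine (hu.fun_neg.exp.const_mul _).congr_deriv ?_
    field_simp
  rw [intervalIntegral.integral_eq_sub_of_hasDerivAt hderiv
    ((by fun_prop : Continuous _).intervalIntegrable _ _),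
    add_sub_cancel_left, mul_div_cancel_right₀ _ hL]
  simp only [sub_self, mul_zero, zero_div, neg_zero, exp_zero]
  ring

lemma integral_mul_exp_neg_mul_sub_div_mul_log (hL : L ≠ 0) (hm : m ≠ 0) (hc : 0 < c) :
    ∫ x in a..a + L, c * exp (-(m * (x - a) / L)) * log (c * exp (-(m * (x - a) / L)))
      = c * L / m * (log c * (1 - exp (-m)) - (1 - (1 + m) * exp (-m))) := by
  have hderiv : ∀ x ∈ uIcc a (a + L),
      HasDerivAt (fun y => -(c * L / m) * exp (-(m * (y - a) / L)) * (log c - 1 - m * (y - a) / L))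
        (c * exp (-(m * (x - a) / L)) * log (c * exp (-(m * (x - a) / L)))) x := by
    intro x _
    have hu : HasDerivAt (fun y => m * (y - a) / L) (m / L) x := by
      simpa using (((hasDerivAt_id x).sub_const a).const_mul m).div_const L
    refine ((hu.fun_neg.exp.const_mul _).mul (hu.const_sub _)).congr_deriv ?_
    rw [log_mul hc.ne' (exp_pos _).ne', log_exp]
    field_simp
    ring
  rw [intervalIntegral.integral_eq_sub_of_hasDerivAt hderiv
    ((by fun_prop (disch := intro; positivity) : Continuous _).intervalIntegrable _ _),
    add_sub_cancel_left, mul_div_cancel_right₀ _ hL]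
  simp only [sub_self, mul_zero, zero_div, neg_zero, exp_zero]
  ring

end TruncatedExponential

lemma integral_Icc_eq_sum_intervalIntegral {n : ℕ} {a : ℕ → ℝ} (ha : Monotone a)
    {g : ℝ → ℝ} (hg : ∀ k < n, IntervalIntegrable g volume (a k) (a (k + 1))) :
    ∫ x in Icc (a 0) (a n), g x = ∑ k ∈ Finset.range n, ∫ x in a k..a (k + 1), g x := by
  rw [intervalIntegral.sum_integral_adjacent_intervals hg,
    intervalIntegral.integral_of_le (ha (Nat.zero_le n)), integral_Icc_eq_integral_Ioc]

noncomputable def truncExpPiece {n : ℕ} (h : Fin n → ℝ) (A m : ℝ) (p : Fin n → ℝ)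
    (i : Fin n) (x : ℝ) : ℝ :=
  p i / (h i * A) * (m / (1 - exp (-m))) * exp (-(m * (x - sCum h i * A) / (h i * A)))

section Piecewise

variable {n : ℕ} {h : Fin n → ℝ} {A m : ℝ} {p : Fin n → ℝ}

lemma mem_uInterval_iff_of_mem_Ioc (hh : ∀ k, 0 ≤ h k) (hA : 0 ≤ A) {i j : Fin n} {x : ℝ}
    (hx : x ∈ Ioc (sCum h i * A) (sCum h (i + 1) * A)) : x ∈ uInterval h A j ↔ j = i := by
  have hmono := sCum_mul_monotone hh hA
  constructor
  · intro hxj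
    by_contra hji
    rcases lt_or_gt_of_ne hji with hlt | hgt
    · have hxle : x ≤ sCum h (j + 1) * A := by
        unfold uInterval at hxj
        split_ifs at hxj with hj0
        · simpa [hj0] using hxj.2
        · exact hxj.2
      linarith [hmono (show j.val + 1 ≤ i from hlt), hx.1]
    · have hj0 : j.val ≠ 0 := by omega
      simp only [uInterval, hj0, if_false] at hxj
      linarith [hmono (show i.val + 1 ≤ j from hgt), hx.2, hxj.1]
  · rintro rfl
    unfold uInterval
    split_ifs with hi0
    · simp only [hi0, sCum_zero, zero_mul, zero_add] at hx
      exact Ioc_subset_Icc_self hx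
    · exact hx

lemma truncExpPiecewise_eqOn_uIoc (hh : ∀ k, 0 ≤ h k) (hA : 0 ≤ A) (i : Fin n) :
    EqOn (truncExpPiecewise h A m p) (truncExpPiece h A m p i)
      (uIoc (sCum h i * A) (sCum h (i + 1) * A)) := by
  intro x hx
  rw [uIoc_of_le (sCum_mul_monotone hh hA (Nat.le_succ _))] at hx
  refine (Finset.sum_eq_single i (fun j _ hji => ?_) (by simp)).trans ?_
  · exact indicator_of_notMem (mt (mem_uInterval_iff_of_mem_Ioc hh hA hx).1 hji) _
  · exact indicator_of_mem ((mem_uInterval_iff_of_mem_Ioc hh hA hx).2 rfl) _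

lemma continuous_truncExpPiece (i : Fin n) : Continuous (truncExpPiece h A m p i) := by
  unfold truncExpPiece
  fun_prop

lemma integral_Icc_comp_truncExpPiecewise (hh : ∀ k, 0 ≤ h k) (hA : 0 ≤ A) {G : ℝ → ℝ}
    (hG : Continuous G) :
    ∫ x in Icc 0 (sCum h n * A), G (truncExpPiecewise h A m p x)
      = ∑ i : Fin n, ∫ x in sCum h i * A..sCum h i * A + h i * A,
          G (truncExpPiece h A m p i x) := by
  have hEq (i : Fin n) : EqOn (fun x => G (truncExpPiecewise h A m p x))
      (fun x => G (truncExpPiece h A m p i x)) (uIoc (sCum h i * A) (sCum h (i + 1) * A)) :=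
    fun x hx => congrArg G (truncExpPiecewise_eqOn_uIoc hh hA i hx)
  have hsplit := integral_Icc_eq_sum_intervalIntegral (sCum_mul_monotone hh hA) (n := n)
    (g := fun x => G (truncExpPiecewise h A m p x)) fun k hk =>
      (intervalIntegrable_congr (hEq ⟨k, hk⟩)).2
        ((hG.comp (continuous_truncExpPiece _)).intervalIntegrable _ _)
  rw [sCum_zero, zero_mul] at hsplit
  rw [hsplit, ← Fin.sum_univ_eq_sum_range (fun k => ∫ x in sCum h k * A..sCum h (k + 1) * A,
    G (truncExpPiecewise h A m p x))]
  refine Finset.sum_congr rfl fun i _ => ?_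
  rw [intervalIntegral.integral_congr_ae (ae_of_all _ (hEq i)), sCum_succ, add_mul]

lemma integral_truncExpPiece {i : Fin n} (hh : 0 < h i) (hA : 0 < A) (hm : m ≠ 0) :
    ∫ x in sCum h i * A..sCum h i * A + h i * A, truncExpPiece h A m p i x = p i := by
  have hL : h i * A ≠ 0 := (mul_pos hh hA).ne'
  simp only [truncExpPiece]
  rw [integral_mul_exp_neg_mul_sub_div _ _ _ _ hL hm]
  field_simp [one_sub_exp_neg_ne_zero hm]

lemma integral_truncExpPiece_mul_log {i : Fin n} (hh : 0 < h i) (hA : 0 < A) (hm : 0 < m)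
    (hp : 0 < p i) :
    ∫ x in sCum h i * A..sCum h i * A + h i * A,
        truncExpPiece h A m p i x * log (truncExpPiece h A m p i x)
      = p i * log (p i / (h i * A) * (m / (1 - exp (-m))))
        - p i * (1 - m * exp (-m) / (1 - exp (-m))) := by
  have hL : 0 < h i * A := mul_pos hh hA
  have hem := one_sub_exp_neg_pos hm
  simp only [truncExpPiece]
  rw [integral_mul_exp_neg_mul_sub_div_mul_log _ _ _ _ hL.ne' hm.ne' (by positivity)]
  field_simp
  ring

end Piecewise

lemma log_div_mul_mul_eq (p h S A M : ℝ) (hp : 0 < p) (hh : 0 < h) (hS : 0 < S) (hA : 0 < A)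
    (hM : 0 < M) :
    log (p / (h * A) * M) = log (p * S / h) - log (S * A) + log M := by
  have hpSh : 0 < p * S / h := by positivity
  rw [show p / (h * A) * M = p * S / h / (S * A) * M by field_simp,
    log_mul (by positivity) hM.ne', log_div hpSh.ne' (by positivity)]

theorem piecewise_density_entropy_general (n : ℕ) (hn : 2 ≤ n) (h : Fin n → ℝ)
    (hpos : ∀ k, 0 < h k)
    (A m : ℝ) (hA : 0 < A) (hm : 0 < m)
    (p : Fin n → ℝ) (hppos : ∀ k, 0 < p k) (hpsum : (∑ k, p k) = 1) :
    (∫ x in Set.Icc 0 (sCum h n * A), truncExpPiecewise h A m p x) = 1 ∧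
    (-∫ x in Set.Icc 0 (sCum h n * A),
        truncExpPiecewise h A m p x * Real.log (truncExpPiecewise h A m p x))
      = -(∑ k : Fin n, p k * Real.log (p k * sCum h n / h k))
        + Real.log (sCum h n * A) - Real.log (m / (1 - Real.exp (-m)))
        + 1 - m * Real.exp (-m) / (1 - Real.exp (-m)) := by
  have hh : ∀ k, 0 ≤ h k := fun k => (hpos k).le
  have hS : 0 < sCum h n := sCum_pos hpos (by omega) (by omega)
  have hM : 0 < m / (1 - exp (-m)) := div_pos hm (one_sub_exp_neg_pos hm)
  constructor
  · rw [integral_Icc_comp_truncExpPiecewise (G := fun y => y) hh hA.le continuous_id]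
    simp only [integral_truncExpPiece (hpos _) hA hm.ne', hpsum]
  · rw [integral_Icc_comp_truncExpPiecewise (G := fun y => y * log y) hh hA.le continuous_mul_log]
    simp only [integral_truncExpPiece_mul_log (hpos _) hA hm (hppos _),
      log_div_mul_mul_eq _ _ _ _ _ (hppos _) (hpos _) hS hA hM, mul_add, mul_sub,
      Finset.sum_add_distrib, Finset.sum_sub_distrib, ← Finset.sum_mul, hpsum]
    ring

theorem piecewise_density_entropy (n : ℕ) (hn : 2 ≤ n) (h : Fin n → ℝ)
    (hord : ∀ i j : Fin n, i ≤ j → h j ≤ h i) (hpos : ∀ k, 0 < h k)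
    (A m : ℝ) (hA : 0 < A) (hm : 0 < m)
    (p : Fin n → ℝ) (hppos : ∀ k, 0 < p k) (hpsum : (∑ k, p k) = 1) :
    (∫ x in Set.Icc 0 (sCum h n * A), truncExpPiecewise h A m p x) = 1 ∧
    (-∫ x in Set.Icc 0 (sCum h n * A),
        truncExpPiecewise h A m p x * Real.log (truncExpPiecewise h A m p x))
      = -(∑ k : Fin n, p k * Real.log (p k * sCum h n / h k))
        + Real.log (sCum h n * A) - Real.log (m / (1 - Real.exp (-m)))
        + 1 - m * Real.exp (-m) / (1 - Real.exp (-m)) :=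
  piecewise_density_entropy_general n hn h hpos A m hA hm p hppos hpsum
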